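/- Consider the linear ODE system I'(t) = 1 − I(t) − L·I(t), A'(t) = L·I(t) − A(t) with L ≥ 0 a fixed constant. For any initial conditions I(0), A(0), the solution satisfies I(t) → 1/(1+L) and A(t) → L/(1+L) as t → ∞. -/

import Mathlib

/-!
Both equations are linear relaxations `f' = a - k f` with `k > 0`, whose solutions converge to
`a / k`. The inactive form obeys `I' = 1 - (1 + L) I`, and the total receptor obeys
`(I + A)' = 1 - (I + A)`, so `I → 1 / (1 + L)` and `I + A → 1`, whence `A → L / (1 + L)`.
-/

open Filter Topology Real

section LinearRelaxation

variable {k : ℝ} {f : ℝ → ℝ}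

lemma eq_mul_exp_of_hasDerivAt_neg_mul (hf : ∀ t, HasDerivAt f (-(k * f t)) t) (t : ℝ) :
    f t = f 0 * exp (-(k * t)) := by
  have hderiv : ∀ s, HasDerivAt (fun s => f s * exp (k * s)) 0 s := fun s => by
    have hexp : HasDerivAt (fun s => exp (k * s)) (exp (k * s) * k) s := by
      simpa using ((hasDerivAt_id s).const_mul k).exp
    exact ((hf s).mul hexp).congr_deriv (by ring)
  have hconst : f t * exp (k * t) = f 0 * exp (k * 0) :=
    is_const_of_deriv_eq_zero (fun s => (hderiv s).differentiableAt)
      (fun s => (hderiv s).deriv) t 0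
  rw [mul_zero, exp_zero, mul_one] at hconst
  rw [exp_neg, ← hconst, mul_inv_cancel_right₀ (exp_pos _).ne']

lemma tendsto_zero_of_hasDerivAt_neg_mul (hk : 0 < k) (hf : ∀ t, HasDerivAt f (-(k * f t)) t) :
    Tendsto f atTop (𝓝 0) := by
  have hexp : Tendsto (fun t => exp (-(k * t))) atTop (𝓝 0) :=
    tendsto_exp_neg_atTop_nhds_zero.comp (tendsto_id.const_mul_atTop hk)
  simpa [← eq_mul_exp_of_hasDerivAt_neg_mul hf] using hexp.const_mul (f 0)

lemma tendsto_div_of_hasDerivAt_sub_mul {a : ℝ} (hk : 0 < k)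
    (hf : ∀ t, HasDerivAt f (a - k * f t) t) : Tendsto f atTop (𝓝 (a / k)) := by
  have hdev : Tendsto (fun t => f t - a / k) atTop (𝓝 0) :=
    tendsto_zero_of_hasDerivAt_neg_mul hk fun t =>
      ((hf t).sub_const (a / k)).congr_deriv (by field_simp; ring)
  simpa using hdev.add_const (a / k)

end LinearRelaxation

theorem receptor_CRN_stabilizes (L : ℝ) (hL : 0 ≤ L) (I A : ℝ → ℝ)
    (hI : ∀ t : ℝ, HasDerivAt I (1 - I t - L * I t) t)
    (hA : ∀ t : ℝ, HasDerivAt A (L * I t - A t) t) :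
    Tendsto I atTop (nhds (1 / (1 + L))) ∧
    Tendsto A atTop (nhds (L / (1 + L))) := by
  have hL1 : 0 < 1 + L := by linarith
  have hI_lim : Tendsto I atTop (𝓝 (1 / (1 + L))) :=
    tendsto_div_of_hasDerivAt_sub_mul hL1 fun t => (hI t).congr_deriv (by ring)
  have htotal_lim : Tendsto (fun t => I t + A t) atTop (𝓝 (1 / 1)) :=
    tendsto_div_of_hasDerivAt_sub_mul one_pos fun t => ((hI t).add (hA t)).congr_deriv (by ring)
  refine ⟨hI_lim, ?_⟩
  have hA_lim := htotal_lim.sub hI_lim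
  have hlim : (1 : ℝ) / 1 - 1 / (1 + L) = L / (1 + L) := by field_simp; ring
  rw [hlim] at hA_lim
  exact hA_lim.congr fun t => by ring
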